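/- arXiv:2207.10580 — 3 statements merged into one kernel-verified Lean document; each statement's English description precedes it below -/
import Mathlib

section
/- Let F, G, H, J, K_p, Ψ, P be real scalars with Ψ > 0, P > 0, and J ≠ 0, and suppose the pair (F, H) is detectable, i.e., there exists k ∈ ℝ with |F − k·H| < 1. For a triple (Γ, Π, Σ̂) ∈ ℝ³, write Σ̂† := Σ̂⁻¹ if Σ̂ ≠ 0 and Σ̂† := 0 if Σ̂ = 0, and define Ψ_Y := H²·Σ̂ + J²·Π + 2·H·J·Γ + Ψ, K_Y := (F·H·Σ̂ + F·J·Γ + G·H·Γ + G·J·Π + K_p·Ψ)/Ψ_Y, and Ω := F²·Σ̂ + G²·Π + 2·F·G·Γ + K_p²·Ψ − Σ̂. Call (Γ, Π, Σ̂) feasible if Π ≥ 0, Σ̂ ≥ 0, Γ² ≤ Π·Σ̂, Π ≤ P, and Ω − K_Y²·Ψ_Y ≥ 0. Then any maximizer (Γ, Π, Σ̂) of the objective (1/2)·log(Ψ_Y) − (1/2)·log(Ψ) over the feasible set satisfies: the pair (F + G·Γ·Σ̂†, H + J·Γ·Σ̂†) is detectable, i.e., there exists k ∈ ℝ with |F +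 G·Γ·Σ̂† − k·(H + J·Γ·Σ̂†)| < 1. -/
/-- Scalar Moore–Penrose pseudoinverse: `x⁻¹` if `x ≠ 0`, else `0`. -/
noncomputable def pinv (x : ℝ) : ℝ := if x = 0 then 0 else x⁻¹

/-- Output-innovation variance `Ψ_Y`. -/
def PsiY (H J Ψ Γ Pi S : ℝ) : ℝ := H ^ 2 * S + J ^ 2 * Pi + 2 * H * J * Γ + Ψ

/-- Kalman gain `K_Y`. -/
noncomputable def KY (F G H J Kp Ψ Γ Pi S : ℝ) : ℝ :=
  (F * H * S + F * J * Γ + G * H * Γ + G * J * Pi + Kp * Ψ) / PsiY H J Ψ Γ Pi S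

/-- The quantity `Ω`. -/
def Omega (F G Kp Ψ Γ Pi S : ℝ) : ℝ := F ^ 2 * S + G ^ 2 * Pi + 2 * F * G * Γ + Kp ^ 2 * Ψ - S

/-- Feasibility of a triple `(Γ, Pi, Σ̂)` for the scalar capacity optimization. -/
def Feasible (F G H J Kp Ψ P Γ Pi S : ℝ) : Prop :=
  0 ≤ Pi ∧ 0 ≤ S ∧ Γ ^ 2 ≤ Pi * S ∧ Pi ≤ P ∧
    0 ≤ Omega F G Kp Ψ Γ Pi S - (KY F G H J Kp Ψ Γ Pi S) ^ 2 * PsiY H J Ψ Γ Pi S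

/-- The objective `(1/2)·log Ψ_Y − (1/2)·log Ψ`. -/
noncomputable def objective (H J Ψ Γ Pi S : ℝ) : ℝ :=
  (1 / 2) * Real.log (PsiY H J Ψ Γ Pi S) - (1 / 2) * Real.log Ψ

lemma psiY_pos (H J Ψ Γ Pi S : ℝ) (hΨ : 0 < Ψ) (hPi : 0 ≤ Pi) (hS : 0 ≤ S)
    (hΓ : Γ ^ 2 ≤ Pi * S) : 0 < PsiY H J Ψ Γ Pi S := by
  unfold PsiY
  nlinarith [sq_nonneg (H ^ 2 * S - J ^ 2 * Pi),
    mul_nonneg (sq_nonneg (H * J)) (sub_nonneg.2 hΓ),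
    mul_nonneg (sq_nonneg H) hS, mul_nonneg (sq_nonneg J) hPi]

set_option maxHeartbeats 1000000 in
/-- Scalar case of Conjecture 1: any maximizer of the feedback-capacity
optimization yields a detectable pair `(F + G·Γ·Σ̂†, H + J·Γ·Σ̂†)`. -/
theorem scalar_maximizer_detectable
    (F G H J Kp Ψ P : ℝ) (hΨ : 0 < Ψ) (hP : 0 < P) (hJ : J ≠ 0)
    (hdet : ∃ k : ℝ, |F - k * H| < 1)
    (Γ Pi S : ℝ) (hfeas : Feasible F G H J Kp Ψ P Γ Pi S)
    (hmax : ∀ Γ' Pi' S' : ℝ, Feasible F G H J Kp Ψ P Γ' Pi' S' →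
      objective H J Ψ Γ' Pi' S' ≤ objective H J Ψ Γ Pi S) :
    ∃ k : ℝ, |F + G * Γ * pinv S - k * (H + J * Γ * pinv S)| < 1 := by
  obtain ⟨hPi, hS, hΓ, hPiP, hcon⟩ := hfeas
  rcases eq_or_lt_of_le hS with hS0 | hSpos
  · -- S = 0 forces Γ = 0
    have hΓ0 : Γ = 0 := by
      have : Γ ^ 2 ≤ 0 := by nlinarith
      nlinarith [sq_nonneg Γ]
    obtain ⟨k, hk⟩ := hdet
    refine ⟨k, ?_⟩
    simpa [hΓ0] using hk
  · have hSne : S ≠ 0 := ne_of_gt hSpos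
    have hpinv : pinv S = S⁻¹ := by unfold pinv; rw [if_neg hSne]
    rw [hpinv]
    by_cases hΓ0 : Γ = 0
    · obtain ⟨k, hk⟩ := hdet
      refine ⟨k, ?_⟩
      simpa [hΓ0] using hk
    · by_cases hc : H + J * Γ * S⁻¹ = 0
      · -- hard case: use maximality
        by_contra hgoal
        have hJΓ : J * Γ = -(H * S) := by
          have := hc
          field_simp at this
          linarith
        have hH : H ≠ 0 := by
          intro h0
          apply hΓ0
          have : J * Γ = 0 := by rw [hJΓ, h0]; ring
          rcases mul_eq_zero.1 this with h | h
          · exact absurd h hJ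
          · exact h
        -- from |a| ≥ 1 derive contradiction via a better feasible point
        rw [not_exists] at hgoal
        have habs : 1 ≤ |F + G * Γ * S⁻¹| := by
          have := hgoal 0
          rw [not_lt] at this
          simpa [hc] using this
        have hkey : J ^ 2 ≤ (J * F - G * H) ^ 2 := by
          have hJa : J * (F + G * Γ * S⁻¹) = J * F - G * H := by
            field_simp
            linear_combination G * hJΓ
          have ha2 : 1 ≤ (F + G * Γ * S⁻¹) ^ 2 := by
            nlinarith [sq_abs (F + G * Γ * S⁻¹), habs, abs_nonneg (F + G * Γ * S⁻¹)]
          calc J ^ 2 = J ^ 2 * 1 := by ring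
            _ ≤ J ^ 2 * (F + G * Γ * S⁻¹) ^ 2 :=
                mul_le_mul_of_nonneg_left ha2 (sq_nonneg J)
            _ = (J * (F + G * Γ * S⁻¹)) ^ 2 := by ring
            _ = (J * F - G * H) ^ 2 := by rw [hJa]
        -- H²·S ≤ J²·Π
        have hHS : H ^ 2 * S ≤ J ^ 2 * Pi := by
          have h1 : (H * S) ^ 2 ≤ J ^ 2 * (Pi * S) := by
            calc (H * S) ^ 2 = (J * Γ) ^ 2 := by rw [hJΓ]; ring
              _ ≤ J ^ 2 * (Pi * S) := by nlinarith [sq_nonneg J]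
          nlinarith [hSpos]
        have hD' : 0 ≤ J ^ 2 * Pi - H ^ 2 * (S / 2) := by nlinarith [sq_nonneg H]
        -- new point (Γ/2, Pi, S/2)
        have hΓ'2 : J * (Γ / 2) = -(H * (S / 2)) := by linarith [hJΓ]
        have hP'eq : PsiY H J Ψ (Γ / 2) Pi (S / 2)
            = (J ^ 2 * Pi - H ^ 2 * (S / 2)) + Ψ := by
          unfold PsiY; linear_combination H * hJΓ
        have hP'pos : 0 < PsiY H J Ψ (Γ / 2) Pi (S / 2) := by
          rw [hP'eq]; linarith
        have hfeas' : Feasible F G H J Kp Ψ P (Γ / 2) Pi (S / 2) := by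
          refine ⟨hPi, by linarith, by nlinarith [mul_nonneg hPi hS], hPiP, ?_⟩
          set N' := F * H * (S / 2) + F * J * (Γ / 2) + G * H * (Γ / 2)
            + G * J * Pi + Kp * Ψ with hN'
          have hJN' : J * N' = G * (J ^ 2 * Pi - H ^ 2 * (S / 2)) + J * Kp * Ψ := by
            rw [hN']; linear_combination ((F * J + G * H) / 2) * hJΓ
          have hJΩ' : J ^ 2 * Omega F G Kp Ψ (Γ / 2) Pi (S / 2)
              = (S / 2) * ((J * F - G * H) ^ 2 - J ^ 2)
                + G ^ 2 * (J ^ 2 * Pi - H ^ 2 * (S / 2)) + J ^ 2 * Kp ^ 2 * Ψ := by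
            unfold Omega; linear_combination (F * G * J) * hJΓ
          have hid : J ^ 2 * (Omega F G Kp Ψ (Γ / 2) Pi (S / 2)
                * PsiY H J Ψ (Γ / 2) Pi (S / 2) - N' ^ 2)
              = ((S / 2) * ((J * F - G * H) ^ 2 - J ^ 2)
                  + G ^ 2 * (J ^ 2 * Pi - H ^ 2 * (S / 2)) + J ^ 2 * Kp ^ 2 * Ψ)
                  * ((J ^ 2 * Pi - H ^ 2 * (S / 2)) + Ψ)
                - (G * (J ^ 2 * Pi - H ^ 2 * (S / 2)) + J * Kp * Ψ) ^ 2 := by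
            calc J ^ 2 * (Omega F G Kp Ψ (Γ / 2) Pi (S / 2)
                  * PsiY H J Ψ (Γ / 2) Pi (S / 2) - N' ^ 2)
                = (J ^ 2 * Omega F G Kp Ψ (Γ / 2) Pi (S / 2))
                    * PsiY H J Ψ (Γ / 2) Pi (S / 2) - (J * N') ^ 2 := by ring
              _ = _ := by rw [hJΩ', hJN', hP'eq]
          have hid2 : ((S / 2) * ((J * F - G * H) ^ 2 - J ^ 2)
                  + G ^ 2 * (J ^ 2 * Pi - H ^ 2 * (S / 2)) + J ^ 2 * Kp ^ 2 * Ψ)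
                  * ((J ^ 2 * Pi - H ^ 2 * (S / 2)) + Ψ)
                - (G * (J ^ 2 * Pi - H ^ 2 * (S / 2)) + J * Kp * Ψ) ^ 2
              = (S / 2) * ((J * F - G * H) ^ 2 - J ^ 2)
                  * ((J ^ 2 * Pi - H ^ 2 * (S / 2)) + Ψ)
                + (J ^ 2 * Pi - H ^ 2 * (S / 2)) * Ψ * (G - J * Kp) ^ 2 := by ring
          have hnn : 0 ≤ Omega F G Kp Ψ (Γ / 2) Pi (S / 2)
              * PsiY H J Ψ (Γ / 2) Pi (S / 2) - N' ^ 2 := by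
            have t1 : 0 ≤ (S / 2) * ((J * F - G * H) ^ 2 - J ^ 2)
                * ((J ^ 2 * Pi - H ^ 2 * (S / 2)) + Ψ) :=
              mul_nonneg (mul_nonneg (by linarith) (by linarith)) (by linarith)
            have t2 : 0 ≤ (J ^ 2 * Pi - H ^ 2 * (S / 2)) * Ψ * (G - J * Kp) ^ 2 :=
              mul_nonneg (mul_nonneg hD' hΨ.le) (sq_nonneg _)
            have h1 : 0 ≤ J ^ 2 * (Omega F G Kp Ψ (Γ / 2) Pi (S / 2)
                * PsiY H J Ψ (Γ / 2) Pi (S / 2) - N' ^ 2) := by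
              rw [hid, hid2]; linarith
            have hJ2 : 0 < J ^ 2 := by positivity
            nlinarith [h1, hJ2]
          have hKYeq : KY F G H J Kp Ψ (Γ / 2) Pi (S / 2) ^ 2
              * PsiY H J Ψ (Γ / 2) Pi (S / 2)
              = N' ^ 2 / PsiY H J Ψ (Γ / 2) Pi (S / 2) := by
            unfold KY
            rw [← hN']
            field_simp
          rw [hKYeq, sub_nonneg, div_le_iff₀ hP'pos]
          linarith
        -- objective strictly increases: contradiction
        have hPY0 : 0 < PsiY H J Ψ Γ Pi S := psiY_pos H J Ψ Γ Pi S hΨ hPi hS hΓ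
        have hPYeq : PsiY H J Ψ Γ Pi S = (J ^ 2 * Pi - H ^ 2 * S) + Ψ := by
          unfold PsiY; linear_combination 2 * H * hJΓ
        have hlt : PsiY H J Ψ Γ Pi S < PsiY H J Ψ (Γ / 2) Pi (S / 2) := by
          rw [hPYeq, hP'eq]
          have : 0 < H ^ 2 * S := by positivity
          nlinarith
        have hobj := hmax (Γ / 2) Pi (S / 2) hfeas'
        have hloglt : Real.log (PsiY H J Ψ Γ Pi S)
            < Real.log (PsiY H J Ψ (Γ / 2) Pi (S / 2)) := Real.log_lt_log hPY0 hlt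
        unfold objective at hobj
        linarith
      · refine ⟨(F + G * Γ * S⁻¹) / (H + J * Γ * S⁻¹), ?_⟩
        rw [div_mul_cancel₀ _ hc]
        simp
end

section
/- Let Σ̂ be a symmetric n×n real matrix and let Σ̂† be its Moore–Penrose pseudoinverse. Let Γ be an m×n real matrix satisfying the orthogonality condition Γ·(I − Σ̂·Σ̂†) = 0, let M be an m×m real matrix, set Π := Γ·Σ̂†·Γᵀ + M, and let F be n×n and G be n×m real matrices. Then (F + G·Γ·Σ̂†)·Σ̂·(F + G·Γ·Σ̂†)ᵀ + G·M·Gᵀ = F·Σ̂·Fᵀ + G·Γ·Fᵀ + F·Γᵀ·Gᵀ + G·Π·Gᵀ. -/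
open Matrix

/-- `X` is the Moore–Penrose pseudoinverse of `A`. -/
def IsMoorePenrose {n : ℕ} (A X : Matrix (Fin n) (Fin n) ℝ) : Prop :=
  A * X * A = A ∧ X * A * X = X ∧ (A * X)ᵀ = A * X ∧ (X * A)ᵀ = X * A

/-- Change of variables for the Riccati-recursion term. -/
theorem riccati_change_of_variables {n m : ℕ}
    (S Sd : Matrix (Fin n) (Fin n) ℝ) (hS : Sᵀ = S) (hMP : IsMoorePenrose S Sd)
    (Γ : Matrix (Fin m) (Fin n) ℝ) (horth : Γ * (1 - S * Sd) = 0)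
    (M Pi : Matrix (Fin m) (Fin m) ℝ) (hPi : Pi = Γ * Sd * Γᵀ + M)
    (F : Matrix (Fin n) (Fin n) ℝ) (G : Matrix (Fin n) (Fin m) ℝ) :
    (F + G * Γ * Sd) * S * (F + G * Γ * Sd)ᵀ + G * M * Gᵀ =
      F * S * Fᵀ + G * Γ * Fᵀ + F * Γᵀ * Gᵀ + G * Pi * Gᵀ := by
  obtain ⟨a1, a2, a3, a4⟩ := hMP
  have hAY : S * Sdᵀ = Sd * S := by
    calc S * Sdᵀ = Sᵀ * Sdᵀ := by rw [hS]
    _ = (Sd * S)ᵀ := (transpose_mul Sd S).symm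
    _ = Sd * S := a4
  have hYA : Sdᵀ * S = S * Sd := by
    calc Sdᵀ * S = Sdᵀ * Sᵀ := by rw [hS]
    _ = (S * Sd)ᵀ := (transpose_mul S Sd).symm
    _ = S * Sd := a3
  have e1 : S * Sd * (S * Sdᵀ) = S * Sdᵀ := by
    rw [← Matrix.mul_assoc, a1]
  have e2 : S * Sd * (S * Sdᵀ) = S * Sd := by
    calc S * Sd * (S * Sdᵀ) = (Sdᵀ * S) * (Sd * S) := by rw [hYA, hAY]
    _ = Sdᵀ * (S * Sd * S) := by rw [Matrix.mul_assoc, ← Matrix.mul_assoc S Sd S]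
    _ = Sdᵀ * S := by rw [a1]
    _ = S * Sd := hYA
  have hcomm' : S * Sd = S * Sdᵀ := e2.symm.trans e1
  have hcomm : Sd * S = S * Sd := by rw [hcomm', hAY]
  have h1 : Γ * (S * Sd) = Γ := by
    have h0 := horth
    rw [Matrix.mul_sub, Matrix.mul_one, sub_eq_zero] at h0
    exact h0.symm
  have hΓ3 : S * Sd * Γᵀ = Γᵀ := by
    calc S * Sd * Γᵀ = (S * Sd)ᵀ * Γᵀ := by rw [a3]
    _ = (Γ * (S * Sd))ᵀ := (transpose_mul Γ (S * Sd)).symm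
    _ = Γᵀ := by rw [h1]
  have c1 : Sd * (S * Sdᵀ) = Sd := by rw [← hcomm', ← Matrix.mul_assoc, a2]
  have key1 : F * S * (G * Γ * Sd)ᵀ = F * Γᵀ * Gᵀ := by
    simp only [transpose_mul, Matrix.mul_assoc]
    rw [← Matrix.mul_assoc S Sdᵀ (Γᵀ * Gᵀ), ← hcomm', ← Matrix.mul_assoc (S * Sd) Γᵀ Gᵀ, hΓ3]
  have key2 : G * Γ * Sd * S * Fᵀ = G * Γ * Fᵀ := by
    simp only [Matrix.mul_assoc]
    rw [← Matrix.mul_assoc Sd S Fᵀ, hcomm, ← Matrix.mul_assoc Γ (S * Sd) Fᵀ, h1]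
  have key3 : G * Γ * Sd * S * (G * Γ * Sd)ᵀ = G * (Γ * Sd * Γᵀ) * Gᵀ := by
    simp only [transpose_mul, Matrix.mul_assoc]
    rw [← Matrix.mul_assoc S Sdᵀ (Γᵀ * Gᵀ), ← Matrix.mul_assoc Sd (S * Sdᵀ) (Γᵀ * Gᵀ), c1]
  rw [hPi, transpose_add, add_mul, add_mul, mul_add, mul_add, key1, key2, key3,
    Matrix.mul_add G (Γ * Sd * Γᵀ) M, Matrix.add_mul]
  abel
end

section
/- Let F, G, H, J, Γ, Σ̂ be real scalars with Σ̂ ≥ 0, and write Σ̂† := Σ̂⁻¹ if Σ̂ ≠ 0 and Σ̂† := 0 if Σ̂ = 0. Suppose the pair (F, H) is detectable (there exists k ∈ ℝ with |F − k·H| < 1). If H + J·Γ·Σ̂† = 0 and |F + G·Γ·Σ̂†| ≥ 1, then Γ ≠ 0 and Σ̂ ≠ 0. -/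
/-- If `(F, H)` is detectable and the pair `(F + G·Γ·Σ̂†, H + J·Γ·Σ̂†)` is not
detectable, then `Γ ≠ 0` and `Σ̂ ≠ 0`. -/
theorem nondetectable_implies_nonzero
    (F G H J Γ S : ℝ) (hS : 0 ≤ S)
    (hdet : ∃ k : ℝ, |F - k * H| < 1)
    (hH : H + J * Γ * pinv S = 0) (hF : 1 ≤ |F + G * Γ * pinv S|) :
    Γ ≠ 0 ∧ S ≠ 0 := by
  have key : Γ * pinv S ≠ 0 := by
    intro h0
    have hH0 : H = 0 := by
      have : J * Γ * pinv S = 0 := by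
        rw [mul_assoc, h0, mul_zero]
      linarith [hH]
    obtain ⟨k, hk⟩ := hdet
    rw [hH0] at hk
    have : F + G * Γ * pinv S = F := by
      rw [mul_assoc, h0, mul_zero, add_zero]
    rw [this] at hF
    simp at hk
    linarith
  constructor
  · intro h; exact key (by rw [h, zero_mul])
  · intro h; exact key (by simp [h, pinv])
end
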